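/- Let n ≥ 2, let x_1,…,x_n ∈ {0,1}^d be pairwise distinct with at most one of them equal to the zero vector, let y_1,…,y_n ∈ {−1,1}, and let k(x,x') = exp(−100·(ln n)·‖x−x'‖₂²). Suppose k(x_i, −x_j) ≤ η for all i,j. Define V' = sup over γ ∈ ℝ^n, γ ≥ 0, of Σ_i γ_i − (1/2)Σ_{i,j} γ_i γ_j y_i y_j k(x_i,x_j), and V = sup over γ ∈ ℝ^n, γ ≥ 0, of Σ_i γ_i − (1/2)Σ_{i,j} γ_i γ_j y_i y_j k(x_i,x_j) + (1/2)Σ_{i,j} γ_i γ_j y_i y_j k(x_i,−x_j). Then |V − V'| ≤ 5·n⁴·η. -/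

import Mathlib

open Finset

/-- The Gaussian kernel with parameter `C = 100 ln n`. -/
noncomputable def gaussK (n d : ℕ) (x y : Fin d → ℝ) : ℝ :=
  Real.exp (-(100 * Real.log n) * ∑ l, (x l - y l) ^ 2)

/-!
Both duals have the form `sup_{γ ≥ 0} (∑ γ - ½ γᵀ M γ)`: `V'` with `M = A = (y_i y_j k(x_i, x_j))`
and `V` with `M = A - B`, `B = (y_i y_j k(x_i, -x_j))`. Distinct binary points are at squared
distance at least `1`, so off the diagonal `k ≤ n⁻¹⁰⁰ ≤ 1/(4n)`, and the same bound holds for all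
entries of `B` when no `x_i` is zero. Then `γᵀ M γ ≥ ‖γ‖²/2` for `γ ≥ 0`, so each objective is at
most `∑ γ - ‖γ‖²/4 ≤ n` and is positive only if `∑ γ ≤ 4n`; on such `γ` the two objectives differ
by `|γᵀ B γ|/2 ≤ η (∑ γ)²/2 ≤ 8 n² η`. If some `x_i = 0`, then `η ≥ k(0, 0) = 1` while the dual with
bias is unbounded, so its `sSup` is the junk value `0` and the bound reads `V' ≤ n ≤ 5 n⁴ η`.
-/

open Matrix

attribute [local instance] Matrix.seminormedAddCommGroup

section dual

variable {ι : Type*} [Fintype ι]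

noncomputable def dualObjective (A : Matrix ι ι ℝ) (γ : ι → ℝ) : ℝ :=
  ∑ i, γ i - 1 / 2 * (γ ⬝ᵥ A *ᵥ γ)

def dualObjectiveValues (A : Matrix ι ι ℝ) : Set ℝ :=
  {v | ∃ γ : ι → ℝ, (∀ i, 0 ≤ γ i) ∧ v = dualObjective A γ}

noncomputable def dualValue (A : Matrix ι ι ℝ) : ℝ :=
  sSup (dualObjectiveValues A)

theorem sq_sum_le_card_mul_dotProduct_self (γ : ι → ℝ) :
    (∑ i, γ i) ^ 2 ≤ Fintype.card ι * (γ ⬝ᵥ γ) := by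
  simpa [dotProduct, sq] using sq_sum_le_card_mul_sum_sq (s := univ) (f := γ)

theorem abs_dotProduct_mulVec_le {A : Matrix ι ι ℝ} {r : ℝ} (hA : ‖A‖ ≤ r) {γ : ι → ℝ}
    (hγ : ∀ i, 0 ≤ γ i) : |γ ⬝ᵥ A *ᵥ γ| ≤ r * (∑ i, γ i) ^ 2 := by
  have hentry (i j : ι) : |A i j| ≤ r := (norm_entry_le_entrywise_sup_norm A).trans hA
  calc |γ ⬝ᵥ A *ᵥ γ| = |∑ i, ∑ j, γ i * A i j * γ j| := by
        simp only [dotProduct, mulVec, mul_sum, mul_assoc]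
    _ ≤ ∑ i, ∑ j, |γ i * A i j * γ j| :=
        (abs_sum_le_sum_abs _ _).trans (sum_le_sum fun i _ => abs_sum_le_sum_abs _ _)
    _ ≤ ∑ i, ∑ j, γ i * r * γ j := by
        gcongr with i _ j _
        rw [abs_mul, abs_mul, abs_of_nonneg (hγ i), abs_of_nonneg (hγ j)]
        gcongr
        · exact hγ j
        · exact hγ i
        · exact hentry i j
    _ = r * (∑ i, γ i) ^ 2 := by
        rw [sq, sum_mul_sum, mul_sum]
        exact sum_congr rfl fun i _ => by rw [mul_sum]; exact sum_congr rfl fun j _ => by ring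

theorem dotProduct_self_div_two_le [DecidableEq ι] {A : Matrix ι ι ℝ} {δ : ℝ} (hA : ‖A - 1‖ ≤ δ)
    (hcard : 2 * Fintype.card ι * δ ≤ 1) {γ : ι → ℝ} (hγ : ∀ i, 0 ≤ γ i) :
    γ ⬝ᵥ γ / 2 ≤ γ ⬝ᵥ A *ᵥ γ := by
  have hδ : 0 ≤ δ := (norm_nonneg _).trans hA
  have hsplit : γ ⬝ᵥ A *ᵥ γ = γ ⬝ᵥ γ + γ ⬝ᵥ (A - 1) *ᵥ γ := by
    rw [sub_mulVec, one_mulVec, dotProduct_sub]; ring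
  have hcs := sq_sum_le_card_mul_dotProduct_self γ
  have herr := neg_le_of_abs_le (abs_dotProduct_mulVec_le hA hγ)
  have hself : 0 ≤ γ ⬝ᵥ γ := sum_nonneg fun i _ => mul_self_nonneg (γ i)
  nlinarith [mul_le_mul_of_nonneg_left hcs hδ]

theorem dualObjective_le [DecidableEq ι] {A : Matrix ι ι ℝ} {δ : ℝ} (hA : ‖A - 1‖ ≤ δ)
    (hcard : 2 * Fintype.card ι * δ ≤ 1) {γ : ι → ℝ} (hγ : ∀ i, 0 ≤ γ i) :
    dualObjective A γ ≤ ∑ i, γ i - γ ⬝ᵥ γ / 4 := by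
  have := dotProduct_self_div_two_le hA hcard hγ
  unfold dualObjective; linarith

theorem sum_sub_dotProduct_self_div_four_le_card (γ : ι → ℝ) :
    ∑ i, γ i - γ ⬝ᵥ γ / 4 ≤ Fintype.card ι := by
  have hcs := sq_sum_le_card_mul_dotProduct_self γ
  have hself : 0 ≤ γ ⬝ᵥ γ := sum_nonneg fun i _ => mul_self_nonneg (γ i)
  nlinarith [sq_nonneg ((Fintype.card ι : ℝ) - γ ⬝ᵥ γ / 4), (Fintype.card ι).cast_nonneg (α := ℝ)]

theorem dualObjective_le_card [DecidableEq ι] {A : Matrix ι ι ℝ} {δ : ℝ} (hA : ‖A - 1‖ ≤ δ)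
    (hcard : 2 * Fintype.card ι * δ ≤ 1) {γ : ι → ℝ} (hγ : ∀ i, 0 ≤ γ i) :
    dualObjective A γ ≤ Fintype.card ι :=
  (dualObjective_le hA hcard hγ).trans (sum_sub_dotProduct_self_div_four_le_card γ)

theorem sum_le_four_mul_card_of_pos {γ : ι → ℝ} (hγ : ∀ i, 0 ≤ γ i)
    (hpos : 0 < ∑ i, γ i - γ ⬝ᵥ γ / 4) : ∑ i, γ i ≤ 4 * Fintype.card ι := by
  have hcs := sq_sum_le_card_mul_dotProduct_self γ
  have hsum : 0 ≤ ∑ i, γ i := sum_nonneg fun i _ => hγ i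
  nlinarith [(Fintype.card ι).cast_nonneg (α := ℝ)]

theorem dualObjective_sub (A B : Matrix ι ι ℝ) (γ : ι → ℝ) :
    dualObjective (A - B) γ = ∑ i, γ i - 1 / 2 * (γ ⬝ᵥ A *ᵥ γ) + 1 / 2 * (γ ⬝ᵥ B *ᵥ γ) := by
  simp only [dualObjective, sub_mulVec, dotProduct_sub]; ring

theorem abs_dualObjective_sub_le {A A' : Matrix ι ι ℝ} {η : ℝ} (hAA' : ‖A - A'‖ ≤ η)
    {γ : ι → ℝ} (hγ : ∀ i, 0 ≤ γ i) :
    |dualObjective A γ - dualObjective A' γ| ≤ η * (∑ i, γ i) ^ 2 / 2 := by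
  have hdiff : dualObjective A γ - dualObjective A' γ = -(γ ⬝ᵥ (A - A') *ᵥ γ) / 2 := by
    simp only [dualObjective, sub_mulVec, dotProduct_sub]; ring
  rw [hdiff, abs_div, abs_neg, abs_two]
  gcongr
  exact abs_dotProduct_mulVec_le hAA' hγ

theorem zero_mem_dualObjectiveValues (A : Matrix ι ι ℝ) : (0 : ℝ) ∈ dualObjectiveValues A :=
  ⟨0, fun _ => le_rfl, by simp [dualObjective]⟩

theorem bddAbove_dualObjectiveValues [DecidableEq ι] {A : Matrix ι ι ℝ} {δ : ℝ}
    (hA : ‖A - 1‖ ≤ δ) (hcard : 2 * Fintype.card ι * δ ≤ 1) :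
    BddAbove (dualObjectiveValues A) := by
  refine ⟨Fintype.card ι, ?_⟩
  rintro v ⟨γ, hγ, rfl⟩
  exact dualObjective_le_card hA hcard hγ

theorem dualValue_nonneg [DecidableEq ι] {A : Matrix ι ι ℝ} {δ : ℝ}
    (hA : ‖A - 1‖ ≤ δ) (hcard : 2 * Fintype.card ι * δ ≤ 1) : 0 ≤ dualValue A :=
  le_csSup (bddAbove_dualObjectiveValues hA hcard) (zero_mem_dualObjectiveValues A)

theorem dualValue_le_card [DecidableEq ι] {A : Matrix ι ι ℝ} {δ : ℝ}
    (hA : ‖A - 1‖ ≤ δ) (hcard : 2 * Fintype.card ι * δ ≤ 1) : dualValue A ≤ Fintype.card ι := by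
  refine csSup_le ⟨0, zero_mem_dualObjectiveValues A⟩ ?_
  rintro v ⟨γ, hγ, rfl⟩
  exact dualObjective_le_card hA hcard hγ

theorem dualValue_le_dualValue_add [DecidableEq ι] {A A' : Matrix ι ι ℝ} {δ η : ℝ}
    (hA : ‖A - 1‖ ≤ δ) (hA' : ‖A' - 1‖ ≤ δ) (hcard : 2 * Fintype.card ι * δ ≤ 1)
    (hAA' : ‖A - A'‖ ≤ η) : dualValue A ≤ dualValue A' + 8 * Fintype.card ι ^ 2 * η := by
  have hη : 0 ≤ η := (norm_nonneg _).trans hAA'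
  have h0 : 0 ≤ dualValue A' := dualValue_nonneg hA' hcard
  refine csSup_le ⟨0, zero_mem_dualObjectiveValues A⟩ ?_
  rintro v ⟨γ, hγ, rfl⟩
  rcases le_or_gt (dualObjective A γ) 0 with hnonpos | hpos
  · nlinarith
  have hsum : ∑ i, γ i ≤ 4 * Fintype.card ι :=
    sum_le_four_mul_card_of_pos hγ (hpos.trans_le (dualObjective_le hA hcard hγ))
  have hsq : (∑ i, γ i) ^ 2 ≤ 16 * Fintype.card ι ^ 2 := by
    nlinarith [sum_nonneg fun i (_ : i ∈ univ) => hγ i]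
  have hclose := le_of_abs_le (abs_dualObjective_sub_le hAA' hγ)
  have hle : dualObjective A' γ ≤ dualValue A' :=
    le_csSup (bddAbove_dualObjectiveValues hA' hcard) ⟨γ, hγ, rfl⟩
  nlinarith

theorem abs_dualValue_sub_le [DecidableEq ι] {A A' : Matrix ι ι ℝ} {δ η : ℝ}
    (hA : ‖A - 1‖ ≤ δ) (hA' : ‖A' - 1‖ ≤ δ) (hcard : 2 * Fintype.card ι * δ ≤ 1)
    (hAA' : ‖A - A'‖ ≤ η) : |dualValue A - dualValue A'| ≤ 8 * Fintype.card ι ^ 2 * η := by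
  rw [abs_sub_le_iff]
  constructor
  · linarith [dualValue_le_dualValue_add hA hA' hcard hAA']
  · rw [norm_sub_rev] at hAA'
    linarith [dualValue_le_dualValue_add hA' hA hcard hAA']

theorem dualValue_eq_zero_of_apply_self_eq_zero {A : Matrix ι ι ℝ} (i : ι) (hi : A i i = 0) :
    dualValue A = 0 := by
  classical
  refine Real.sSup_of_not_bddAbove fun ⟨M, hM⟩ => ?_
  have hmem : max M 0 + 1 ∈ dualObjectiveValues A := by
    refine ⟨Pi.single i (max M 0 + 1), fun j => ?_, ?_⟩
    · rcases eq_or_ne j i with rfl | hj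
      · simp only [Pi.single_eq_same]; positivity
      · simp [hj]
    · simp [dualObjective, hi]
  linarith [hM hmem, le_max_left M 0]

end dual

theorem gaussK_pos (n d : ℕ) (u v : Fin d → ℝ) : 0 < gaussK n d u v := Real.exp_pos _

@[simp]
theorem gaussK_self (n d : ℕ) (u : Fin d → ℝ) : gaussK n d u u = 1 := by
  simp [gaussK]

theorem gaussK_le_of_one_le_sum_sq {n d : ℕ} {u v : Fin d → ℝ}
    (h : 1 ≤ ∑ l, (u l - v l) ^ 2) : gaussK n d u v ≤ Real.exp (-(100 * Real.log n)) := by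
  have hlog := Real.log_natCast_nonneg n
  exact Real.exp_le_exp.mpr (by nlinarith)

theorem four_mul_mul_exp_neg_hundred_mul_log_le {n : ℕ} (hn : 2 ≤ n) :
    4 * n * Real.exp (-(100 * Real.log n)) ≤ 1 := by
  have hn' : (2 : ℝ) ≤ n := by exact_mod_cast hn
  have hpow : Real.exp (100 * Real.log n) = (n : ℝ) ^ 100 := by
    rw [show (100 : ℝ) = ((100 : ℕ) : ℝ) by norm_num, ← Real.log_pow,
      Real.exp_log (by positivity)]
  rw [Real.exp_neg, hpow, ← div_eq_mul_inv, div_le_one (by positivity)]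
  calc 4 * (n : ℝ) ≤ (n : ℝ) ^ 2 * n := by nlinarith
    _ = (n : ℝ) ^ 3 := by ring
    _ ≤ (n : ℝ) ^ 100 := pow_le_pow_right₀ (by linarith) (by norm_num)

theorem one_le_sum_sq_of_one_le_abs {κ : Type*} [Fintype κ] {f : κ → ℝ} (l : κ)
    (h : 1 ≤ |f l|) : 1 ≤ ∑ m, f m ^ 2 :=
  ((one_le_sq_iff_one_le_abs _).mpr h).trans
    (single_le_sum (fun m _ => sq_nonneg (f m)) (mem_univ l))

theorem one_le_sum_sq_sub_of_ne {κ : Type*} [Fintype κ] {u v : κ → ℝ}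
    (hu : ∀ l, u l = 0 ∨ u l = 1) (hv : ∀ l, v l = 0 ∨ v l = 1) (huv : u ≠ v) :
    1 ≤ ∑ l, (u l - v l) ^ 2 := by
  obtain ⟨l, hl⟩ := Function.ne_iff.mp huv
  refine one_le_sum_sq_of_one_le_abs l ?_
  rcases hu l with h | h <;> rcases hv l with h' | h' <;> simp_all

theorem one_le_sum_sq_sub_neg_of_ne_zero {κ : Type*} [Fintype κ] {u v : κ → ℝ}
    (hu : ∀ l, u l = 0 ∨ u l = 1) (hv : ∀ l, v l = 0 ∨ v l = 1) (hu0 : u ≠ 0) :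
    1 ≤ ∑ l, (u l - (-v) l) ^ 2 := by
  obtain ⟨l, hl⟩ := Function.ne_iff.mp hu0
  have hul : u l = 1 := (hu l).resolve_left hl
  have hvl : 0 ≤ v l := by rcases hv l with h | h <;> simp [h]
  refine one_le_sum_sq_of_one_le_abs l ?_
  rw [Pi.neg_apply, sub_neg_eq_add, hul, abs_of_nonneg (by linarith)]
  linarith

def signedGram {ι : Type*} (y : ι → ℝ) (K : ι → ι → ℝ) : Matrix ι ι ℝ :=
  of fun i j => y i * y j * K i j

section signedGram

variable {ι : Type*} [Fintype ι] {y : ι → ℝ}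

theorem sum_sum_mul_eq_dotProduct_signedGram_mulVec (γ : ι → ℝ) (K : ι → ι → ℝ) :
    ∑ i, ∑ j, γ i * γ j * y i * y j * K i j = γ ⬝ᵥ signedGram y K *ᵥ γ := by
  simp only [dotProduct, mulVec, signedGram, of_apply, mul_sum]
  exact sum_congr rfl fun i _ => sum_congr rfl fun j _ => by ring

theorem norm_signedGram_le (hy : ∀ i, |y i| = 1) {K : ι → ι → ℝ} {r : ℝ} (hr : 0 ≤ r)
    (hK : ∀ i j, |K i j| ≤ r) : ‖signedGram y K‖ ≤ r :=
  (norm_le_iff hr).mpr fun i j => by simpa [signedGram, abs_mul, hy] using hK i j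

theorem norm_signedGram_sub_one_le [DecidableEq ι] (hy : ∀ i, |y i| = 1) {K : ι → ι → ℝ}
    {r : ℝ} (hr : 0 ≤ r) (hdiag : ∀ i, K i i = 1) (hK : ∀ i j, i ≠ j → |K i j| ≤ r) :
    ‖signedGram y K - 1‖ ≤ r := by
  refine (norm_le_iff hr).mpr fun i j => ?_
  rcases eq_or_ne i j with rfl | hij
  · have hsq : y i * y i = 1 := by rw [← abs_mul_self, abs_mul, hy, one_mul]
    simp [signedGram, hdiag, hsq, hr]
  · simpa [signedGram, hij, abs_mul, hy] using hK i j hij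

theorem norm_signedGram_gaussK_sub_one_le [DecidableEq ι] (hy : ∀ i, |y i| = 1) {n d : ℕ}
    {x : ι → Fin d → ℝ} (hx : ∀ i l, x i l = 0 ∨ x i l = 1) (hxinj : Function.Injective x) :
    ‖signedGram y (fun i j => gaussK n d (x i) (x j)) - 1‖ ≤ Real.exp (-(100 * Real.log n)) :=
  norm_signedGram_sub_one_le hy (Real.exp_pos _).le (fun i => gaussK_self n d (x i))
    fun i j hij => (abs_of_pos (gaussK_pos ..)).trans_le <| gaussK_le_of_one_le_sum_sq <|
      one_le_sum_sq_sub_of_ne (hx i) (hx j) (hxinj.ne hij)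

theorem norm_signedGram_gaussK_neg_le (hy : ∀ i, |y i| = 1) {n d : ℕ} {x : ι → Fin d → ℝ}
    (hx : ∀ i l, x i l = 0 ∨ x i l = 1) (hx0 : ∀ i, x i ≠ 0) :
    ‖signedGram y (fun i j => gaussK n d (x i) (-(x j)))‖ ≤ Real.exp (-(100 * Real.log n)) :=
  norm_signedGram_le hy (Real.exp_pos _).le fun i j =>
    (abs_of_pos (gaussK_pos ..)).trans_le <| gaussK_le_of_one_le_sum_sq <|
      one_le_sum_sq_sub_neg_of_ne_zero (hx i) (hx j) (hx0 i)

end signedGram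

theorem dual_svm_bias_perturbation_general (n d : ℕ) (hn : 2 ≤ n)
    (x : Fin n → Fin d → ℝ)
    (hx01 : ∀ i l, x i l = 0 ∨ x i l = 1)
    (hxinj : Function.Injective x)
    (y : Fin n → ℝ) (hy : ∀ i, y i = 1 ∨ y i = -1)
    (η : ℝ) (hη : ∀ i j, gaussK n d (x i) (-(x j)) ≤ η) :
    |sSup {v : ℝ | ∃ γ : Fin n → ℝ, (∀ i, 0 ≤ γ i) ∧
          v = (∑ i, γ i)
            - (1 / 2) * ∑ i, ∑ j, γ i * γ j * y i * y j * gaussK n d (x i) (x j)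
            + (1 / 2) * ∑ i, ∑ j, γ i * γ j * y i * y j * gaussK n d (x i) (-(x j))}
      - sSup {v : ℝ | ∃ γ : Fin n → ℝ, (∀ i, 0 ≤ γ i) ∧
          v = (∑ i, γ i)
            - (1 / 2) * ∑ i, ∑ j, γ i * γ j * y i * y j * gaussK n d (x i) (x j)}|
      ≤ 5 * (n : ℝ) ^ 4 * η := by
  set ε := Real.exp (-(100 * Real.log n))
  set A := signedGram y fun i j => gaussK n d (x i) (x j)
  set B := signedGram y fun i j => gaussK n d (x i) (-(x j))
  simp only [sum_sum_mul_eq_dotProduct_signedGram_mulVec, ← dualObjective_sub]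
  change |dualValue (A - B) - dualValue A| ≤ _
  have hy1 (i : Fin n) : |y i| = 1 := by rcases hy i with h | h <;> simp [h]
  have hcard : 2 * Fintype.card (Fin n) * (2 * ε) ≤ 1 := by
    rw [Fintype.card_fin]; linarith [four_mul_mul_exp_neg_hundred_mul_log_le hn]
  have hA : ‖A - 1‖ ≤ ε := norm_signedGram_gaussK_sub_one_le hy1 hx01 hxinj
  have hε : 0 ≤ ε := (norm_nonneg _).trans hA
  have hn2 : (2 : ℝ) ≤ n := by exact_mod_cast hn
  by_cases hzero : ∃ i, x i = 0
  · obtain ⟨i, hi⟩ := hzero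
    have hη1 : 1 ≤ η := by simpa [hi] using hη i i
    rw [dualValue_eq_zero_of_apply_self_eq_zero i (by simp [A, B, signedGram, hi]), zero_sub,
      abs_neg, abs_of_nonneg (dualValue_nonneg hA (by linarith))]
    calc dualValue A ≤ n := by simpa using dualValue_le_card hA (by linarith)
      _ ≤ 5 * (n : ℝ) ^ 4 * η := by
          nlinarith [le_self_pow₀ (by linarith : (1 : ℝ) ≤ n) (by norm_num : 4 ≠ 0)]
  · have hBε : ‖B‖ ≤ ε := norm_signedGram_gaussK_neg_le hy1 hx01 (by simpa using hzero)
    have hη0 : 0 ≤ η := (gaussK_pos ..).le.trans (hη ⟨0, by omega⟩ ⟨0, by omega⟩)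
    have hBη : ‖B‖ ≤ η :=
      norm_signedGram_le hy1 hη0 fun i j => (abs_of_pos (gaussK_pos ..)).trans_le (hη i j)
    have hAB : ‖(A - B) - 1‖ ≤ 2 * ε := by
      rw [sub_right_comm]; exact (norm_sub_le _ _).trans (by linarith)
    calc _ ≤ 8 * Fintype.card (Fin n) ^ 2 * η :=
          abs_dualValue_sub_le hAB (hA.trans (by linarith)) hcard (by simpa using hBη)
      _ ≤ 5 * (n : ℝ) ^ 4 * η := by
          rw [Fintype.card_fin]
          nlinarith [mul_le_mul_of_nonneg_left (sq_le_sq' (by linarith) hn2) hη0]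

/-- Perturbation bound relating the dual SVM without bias (value `V'`) to the
symmetrized dual SVM with bias (value `V`): if `k(x_i, −x_j) ≤ η` for all
`i, j`, then `|V − V'| ≤ 5 n⁴ η`. -/
theorem dual_svm_bias_perturbation (n d : ℕ) (hn : 2 ≤ n)
    (x : Fin n → Fin d → ℝ)
    (hx01 : ∀ i l, x i l = 0 ∨ x i l = 1)
    (hxinj : Function.Injective x)
    (hzero : ∀ i j, x i = 0 → x j = 0 → i = j)
    (y : Fin n → ℝ) (hy : ∀ i, y i = 1 ∨ y i = -1)
    (η : ℝ) (hη : ∀ i j, gaussK n d (x i) (-(x j)) ≤ η) :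
    |sSup {v : ℝ | ∃ γ : Fin n → ℝ, (∀ i, 0 ≤ γ i) ∧
          v = (∑ i, γ i)
            - (1 / 2) * ∑ i, ∑ j, γ i * γ j * y i * y j * gaussK n d (x i) (x j)
            + (1 / 2) * ∑ i, ∑ j, γ i * γ j * y i * y j * gaussK n d (x i) (-(x j))}
      - sSup {v : ℝ | ∃ γ : Fin n → ℝ, (∀ i, 0 ≤ γ i) ∧
          v = (∑ i, γ i)
            - (1 / 2) * ∑ i, ∑ j, γ i * γ j * y i * y j * gaussK n d (x i) (x j)}|
      ≤ 5 * (n : ℝ) ^ 4 * η :=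
  dual_svm_bias_perturbation_general n d hn x hx01 hxinj y hy η hη
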